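/- arXiv:1506.04457 — 2 statements merged into one kernel-verified Lean document; each statement's English description precedes it below -/
import Mathlib

section
/- The reflections w_0, …, w_8 satisfy the fundamental relations of the affine Weyl group W(E_8^{(1)}): w_i ∘ w_i = id for i = 0,…,8; (w_i ∘ w_{i+1})^3 = id for i = 1,…,6; (w_0 ∘ w_7)^3 = id; (w_3 ∘ w_8)^3 = id; and (w_i ∘ w_j)^2 = id for every other pair i ≠ j (i.e. whenever {i,j} is not one of {1,2},{2,3},{3,4},{4,5},{5,6},{6,7},{0,7},{3,8}). -/
open Finset Function

/-- The Picard lattice `ℤ^10` with basis `H_0, H_1, E_1, …, E_8`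
(coordinates `0, 1, 2, …, 9`). -/
abbrev Pic : Type := Fin 10 → ℤ

/-- The intersection form: `(H_0|H_1) = 1`, `(H_0|H_0) = (H_1|H_1) = 0`,
`(H_0|E_i) = (H_1|E_i) = 0`, `(E_i|E_j) = -δ_{ij}`. -/
def form (v w : Pic) : ℤ :=
  v 0 * w 1 + v 1 * w 0
    - v 2 * w 2 - v 3 * w 3 - v 4 * w 4 - v 5 * w 5
    - v 6 * w 6 - v 7 * w 7 - v 8 * w 8 - v 9 * w 9

/-- The anticanonical class `δ = 2H_0 + 2H_1 - (E_1 + ⋯ + E_8)`. -/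
def delta : Pic := ![2, 2, -1, -1, -1, -1, -1, -1, -1, -1]

/-- The simple roots `β_0, …, β_8`:
`β_0 = E_7 - E_8`, `β_1 = H_1 - H_0`, `β_2 = H_0 - E_1 - E_2`,
`β_3 = E_2 - E_3`, `β_4 = E_3 - E_4`, `β_5 = E_4 - E_5`,
`β_6 = E_5 - E_6`, `β_7 = E_6 - E_7`, `β_8 = E_1 - E_2`. -/
def β : Fin 9 → Pic :=
  ![![0, 0, 0, 0, 0, 0, 0, 0, 1, -1],
    ![-1, 1, 0, 0, 0, 0, 0, 0, 0, 0],
    ![1, 0, -1, -1, 0, 0, 0, 0, 0, 0],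
    ![0, 0, 0, 1, -1, 0, 0, 0, 0, 0],
    ![0, 0, 0, 0, 1, -1, 0, 0, 0, 0],
    ![0, 0, 0, 0, 0, 1, -1, 0, 0, 0],
    ![0, 0, 0, 0, 0, 0, 1, -1, 0, 0],
    ![0, 0, 0, 0, 0, 0, 0, 1, -1, 0],
    ![0, 0, 1, -1, 0, 0, 0, 0, 0, 0]]

/-- The reflection `w_i(v) = v + (v|β_i)·β_i`. -/
def w (i : Fin 9) : Pic → Pic := fun v => v + form v (β i) • β i

/-- The unordered pairs of indices joined by an edge in the `E_8^{(1)}` Dynkin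
diagram for the `β`-labelling:
`{1,2},{2,3},{3,4},{4,5},{5,6},{6,7},{0,7},{3,8}`. -/
def E8pairs : Finset (Finset (Fin 9)) :=
  {{1, 2}, {2, 3}, {3, 4}, {4, 5}, {5, 6}, {6, 7}, {0, 7}, {3, 8}}

/-- Coefficient vector so that `form v (β i) = ∑ l, c i l * v l`. -/
def c (i : Fin 9) : Fin 10 → ℤ := fun l =>
  if l = 0 then β i 1 else if l = 1 then β i 0 else -(β i l)

/-- The matrix of the reflection `w i`. -/
def M (i : Fin 9) : Matrix (Fin 10) (Fin 10) ℤ :=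
  1 + Matrix.of (fun k l => β i k * c i l)

/-- Explicit 10×10 matrix multiplication (kernel-reduction friendly). -/
def mmul (A B : Matrix (Fin 10) (Fin 10) ℤ) : Matrix (Fin 10) (Fin 10) ℤ :=
  Matrix.of fun k l =>
    A k 0 * B 0 l + A k 1 * B 1 l + A k 2 * B 2 l + A k 3 * B 3 l + A k 4 * B 4 l +
    A k 5 * B 5 l + A k 6 * B 6 l + A k 7 * B 7 l + A k 8 * B 8 l + A k 9 * B 9 l

lemma fin_sum_expand (f : Fin 10 → ℤ) :
    ∑ m, f m = f 0 + f 1 + f 2 + f 3 + f 4 + f 5 + f 6 + f 7 + f 8 + f 9 := by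
  rw [Fin.sum_univ_succ, Fin.sum_univ_succ, Fin.sum_univ_eight]
  simp only [show (Fin.succ (0:Fin 9)) = (1:Fin 10) from rfl,
    show (Fin.succ (0:Fin 8)).succ = (2:Fin 10) from rfl,
    show (Fin.succ (1:Fin 8)).succ = (3:Fin 10) from rfl,
    show (Fin.succ (2:Fin 8)).succ = (4:Fin 10) from rfl,
    show (Fin.succ (3:Fin 8)).succ = (5:Fin 10) from rfl,
    show (Fin.succ (4:Fin 8)).succ = (6:Fin 10) from rfl,
    show (Fin.succ (5:Fin 8)).succ = (7:Fin 10) from rfl,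
    show (Fin.succ (6:Fin 8)).succ = (8:Fin 10) from rfl,
    show (Fin.succ (7:Fin 8)).succ = (9:Fin 10) from rfl]
  ring

lemma mmul_eq (A B : Matrix (Fin 10) (Fin 10) ℤ) : mmul A B = A * B := by
  funext k l
  show _ = ∑ m, A k m * B m l
  rw [fin_sum_expand]
  rfl

/-- Iterated `mmul`-power. -/
def pw (A : Matrix (Fin 10) (Fin 10) ℤ) : ℕ → Matrix (Fin 10) (Fin 10) ℤ
  | 0 => 1
  | n + 1 => mmul (pw A n) A

lemma pw_eq (A : Matrix (Fin 10) (Fin 10) ℤ) : ∀ n, pw A n = A ^ n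
  | 0 => rfl
  | n + 1 => by rw [pw, mmul_eq, pw_eq A n, pow_succ]

lemma w_eq (i : Fin 9) : w i = (M i).mulVec := by
  funext v k
  rw [M, Matrix.add_mulVec, Matrix.one_mulVec]
  show v k + form v (β i) * β i k = v k + (Matrix.of fun k l => β i k * c i l).mulVec v k
  show _ = v k + ∑ m, β i k * c i m * v m
  rw [fin_sum_expand]
  simp only [c, form, Fin.reduceEq, reduceIte]
  ring

lemma iterate_mulVec (A B : Matrix (Fin 10) (Fin 10) ℤ) (n : ℕ) :
    (A.mulVec ∘ B.mulVec)^[n] = ((A * B) ^ n).mulVec := by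
  induction n with
  | zero => funext v; simp [Matrix.one_mulVec]
  | succ n ih =>
      rw [Function.iterate_succ, ih]
      funext v
      simp [Matrix.mulVec_mulVec, pow_succ, Matrix.mul_assoc]

set_option maxHeartbeats 4000000 in
lemma key1 : ∀ i : Fin 9, mmul (M i) (M i) = 1 := by decide

set_option maxHeartbeats 4000000 in
lemma key2 : ∀ i j : Fin 9, i ≠ j →
    pw (mmul (M i) (M j)) (if ({i, j} : Finset (Fin 9)) ∈ E8pairs then 3 else 2) = 1 := by
  decide

/-- The reflections `w_0, …, w_8` satisfy the fundamental relations of the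
affine Weyl group `W(E_8^{(1)})`: `w_i² = 1`; `(w_i w_j)³ = 1` when `{i,j}` is
an edge of the diagram (`{1,2},…,{6,7},{0,7},{3,8}`), and `(w_i w_j)² = 1` for
every other pair `i ≠ j`. -/
theorem statement_9 :
    (∀ i : Fin 9, w i ∘ w i = id) ∧
    (∀ i j : Fin 9, i ≠ j →
      (w i ∘ w j)^[if ({i, j} : Finset (Fin 9)) ∈ E8pairs then 3 else 2] = id) := by
  constructor
  · intro i
    have h := key1 i
    rw [mmul_eq] at h
    funext v
    simp [w_eq, Matrix.mulVec_mulVec, h, Matrix.one_mulVec]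
  · intro i j hij
    have h := key2 i j hij
    rw [pw_eq, mmul_eq] at h
    rw [w_eq, w_eq, iterate_mulVec, h]
    funext v
    simp [Matrix.one_mulVec]
end

section
/- The reflections s_0, …, s_7 together with σ satisfy the fundamental relations of the extended affine Weyl group of type E_7^{(1)}: s_i ∘ s_i = id for i = 0,…,7; (s_i ∘ s_{i+1})³ = id for i = 1,…,6; (s_4 ∘ s_0)³ = id; (s_i ∘ s_j)² = id for every other pair i ≠ j (i.e. whenever {i,j} is not one of {1,2},{2,3},{3,4},{4,5},{5,6},{6,7},{0,4}); σ ∘ σ = id; and σ ∘ s_i = s_{8−i} ∘ σ for i = 1, 2, 3, 5, 6, 7. -/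
open Finset Function

/-- `D_1 = H_f + H_g - e_1 - e_2 - e_3 - e_4`. -/
def D1 : Pic := ![1, 1, -1, -1, -1, -1, 0, 0, 0, 0]

/-- `D_2 = H_f + H_g - e_5 - e_6 - e_7 - e_8`. -/
def D2 : Pic := ![1, 1, 0, 0, 0, 0, -1, -1, -1, -1]

/-- The simple roots `α_0, …, α_7`:
`α_0 = H_f - H_g`, `α_1 = e_2 - e_1`, `α_2 = e_3 - e_2`, `α_3 = e_4 - e_3`,
`α_4 = H_g - e_4 - e_5`, `α_5 = e_5 - e_6`, `α_6 = e_6 - e_7`,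
`α_7 = e_7 - e_8`. -/
def α : Fin 8 → Pic :=
  ![![1, -1, 0, 0, 0, 0, 0, 0, 0, 0],
    ![0, 0, -1, 1, 0, 0, 0, 0, 0, 0],
    ![0, 0, 0, -1, 1, 0, 0, 0, 0, 0],
    ![0, 0, 0, 0, -1, 1, 0, 0, 0, 0],
    ![0, 1, 0, 0, 0, -1, -1, 0, 0, 0],
    ![0, 0, 0, 0, 0, 0, 1, -1, 0, 0],
    ![0, 0, 0, 0, 0, 0, 0, 1, -1, 0],
    ![0, 0, 0, 0, 0, 0, 0, 0, 1, -1]]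

/-- The unordered pairs of indices joined by an edge in the `E_7^{(1)}` Dynkin
diagram: `{1,2},{2,3},{3,4},{4,5},{5,6},{6,7},{0,4}`. -/
def E7pairs : Finset (Finset (Fin 8)) :=
  {{1, 2}, {2, 3}, {3, 4}, {4, 5}, {5, 6}, {6, 7}, {0, 4}}

/-- The reflection `s_i(v) = v + (v|α_i)·α_i`. -/
def s (i : Fin 8) : Pic → Pic := fun v => v + form v (α i) • α i

/-- The diagram automorphism `σ`, fixing `H_f` and `H_g` and sending
`e_i ↦ e_{9-i}` for `i = 1, …, 8`. -/
def σc : Pic → Pic := fun v =>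
  ![v 0, v 1, v 9, v 8, v 7, v 6, v 5, v 4, v 3, v 2]


lemma form_expand (x w u : Pic) (c : ℤ) : form (x + c • w) u = form x u + c * form w u := by
  simp only [form, Pi.add_apply, Pi.smul_apply, smul_eq_mul]; ring

lemma norm_α : ∀ i : Fin 8, form (α i) (α i) = -2 := by decide

lemma order2 (i j : Fin 8) (hii : form (α i) (α i) = -2) (hjj : form (α j) (α j) = -2)
    (hij : form (α i) (α j) = 0) (hji : form (α j) (α i) = 0) :
    (s i ∘ s j)^[2] = id := by
  funext v
  show s i (s j (s i (s j v))) = v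
  simp only [s, form_expand, hii, hjj, hij, hji]
  module

lemma order3 (i j : Fin 8) (hii : form (α i) (α i) = -2) (hjj : form (α j) (α j) = -2)
    (hij : form (α i) (α j) = 1) (hji : form (α j) (α i) = 1) :
    (s i ∘ s j)^[3] = id := by
  funext v
  show s i (s j (s i (s j (s i (s j v))))) = v
  simp only [s, form_expand, hii, hjj, hij, hji]
  module

lemma σc_linear (v w : Pic) (c : ℤ) : σc (v + c • w) = σc v + c • σc w := by
  funext k; fin_cases k <;> rfl

lemma form_σc (v w : Pic) : form (σc v) (σc w) = form v w := by
  show v 0 * w 1 + v 1 * w 0 - v 9 * w 9 - v 8 * w 8 - v 7 * w 7 - v 6 * w 6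
      - v 5 * w 5 - v 4 * w 4 - v 3 * w 3 - v 2 * w 2 = form v w
  simp only [form]; ring

lemma sigma_rel (i j : Fin 8) (h : σc (α i) = α j) : σc ∘ s i = s j ∘ σc := by
  funext v
  show σc (s i v) = s j (σc v)
  have h1 : σc (s i v) = σc v + form v (α i) • σc (α i) := σc_linear v (α i) (form v (α i))
  rw [h1, h, show form v (α i) = form (σc v) (α j) by rw [← form_σc v (α i), h]]
  rfl

/-- The reflections `s_0, …, s_7` and `σ` satisfy the fundamental relations of
the extended affine Weyl group of type `E_7^{(1)}`. -/
theorem statement_19 :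
    (∀ i : Fin 8, s i ∘ s i = id) ∧
    (∀ i j : Fin 8, i ≠ j →
      (s i ∘ s j)^[if ({i, j} : Finset (Fin 8)) ∈ E7pairs then 3 else 2] = id) ∧
    (σc ∘ σc = id) ∧
    (σc ∘ s 1 = s 7 ∘ σc) ∧ (σc ∘ s 2 = s 6 ∘ σc) ∧ (σc ∘ s 3 = s 5 ∘ σc) ∧
    (σc ∘ s 5 = s 3 ∘ σc) ∧ (σc ∘ s 6 = s 2 ∘ σc) ∧ (σc ∘ s 7 = s 1 ∘ σc) := by
  refine ⟨?_, ?_, ?_, ?_, ?_, ?_, ?_, ?_, ?_⟩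
  · intro i
    funext v
    show s i (s i v) = v
    have h := norm_α i
    simp only [s, form_expand, h]
    module
  · intro i j hne
    fin_cases i <;> fin_cases j <;>
      first
        | exact absurd rfl hne
        | (rw [if_pos (by decide)]
           exact order3 _ _ (by decide) (by decide) (by decide) (by decide))
        | (rw [if_neg (by decide)]
           exact order2 _ _ (by decide) (by decide) (by decide) (by decide))
  · funext v k; fin_cases k <;> rfl
  · exact sigma_rel 1 7 (by decide)
  · exact sigma_rel 2 6 (by decide)
  · exact sigma_rel 3 5 (by decide)
  · exact sigma_rel 5 3 (by decide)
  · exact sigma_rel 6 2 (by decide)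
  · exact sigma_rel 7 1 (by decide)
end
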